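/- Fundamental theorem of Hopf modules: for a Hopf algebra H over a field k, the functor V ↦ V ⊗ H from k-vector spaces to right-right Hopf modules over H is an equivalence of categories, with quasi-inverse the coinvariants functor M ↦ M^{coH} = {m ∈ M : ρ(m) = m ⊗ 1}. In particular, every Hopf module M is isomorphic to M^{coH} ⊗ H as a Hopf module. -/

import Mathlib

/-!
The inverse of `v ⊗ h ↦ v · h` is `m ↦ P(m₀) ⊗ m₁`, where `P m = m₀ · S(m₁)` projects onto the
coinvariants. That `P` lands in the coinvariants rests on the antipode being an anti-coalgebra map,
`Δ (S h) = S h₂ ⊗ S h₁`, which holds because both sides are convolution inverses of `Δ`. Everything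
else is a Sweedler computation with the antipode axiom `h₁ S(h₂) = S(h₁) h₂ = ε(h) 1`.
-/

open TensorProduct Coalgebra

section

variable (k H M : Type*)

section HopfModule

variable [Field k] [Ring H] [HopfAlgebra k H] [AddCommGroup M] [Module k M]

/-- The right `H`-action on `M ⊗ H` given by `(v ⊗ g)·h = v ⊗ gh`, for any `k`-space `W`,
as a map `(W ⊗ H) ⊗ H → W ⊗ H`. -/
noncomputable def freeAct (W : Type*) [AddCommGroup W] [Module k W] :
    (W ⊗[k] H) ⊗[k] H →ₗ[k] W ⊗[k] H :=
  TensorProduct.map LinearMap.id (LinearMap.mul' k H)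
    ∘ₗ (TensorProduct.assoc k W H H).toLinearMap

/-- The right `H`-coaction on `W ⊗ H` given by `id ⊗ Δ`, as a map `W ⊗ H → (W ⊗ H) ⊗ H`. -/
noncomputable def freeCoact (W : Type*) [AddCommGroup W] [Module k W] :
    W ⊗[k] H →ₗ[k] (W ⊗[k] H) ⊗[k] H :=
  (TensorProduct.assoc k W H H).symm.toLinearMap
    ∘ₗ TensorProduct.map LinearMap.id Coalgebra.comul

end HopfModule

end

open HopfAlgebra WithConv
open LinearMap (rTensor lTensor mul')

namespace HopfAlgebra

variable {k H : Type*} [CommSemiring k] [Semiring H] [HopfAlgebra k H]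

local notation "S" => antipode k (A := H)
local notation "Δ" => comul (R := k) (A := H)

/-- `(S a₁ ⊗ 1) * Δ a₂ = 1 ⊗ a` in Sweedler notation. -/
lemma mul'_comp_map_antipode_tmul_one_comul_comp_comul :
    mul' k (H ⊗[k] H) ∘ₗ map ((TensorProduct.mk k H H).flip 1 ∘ₗ S) Δ ∘ₗ Δ =
      TensorProduct.mk k H H 1 := by
  have reassoc : mul' k (H ⊗[k] H) ∘ₗ map ((TensorProduct.mk k H H).flip 1 ∘ₗ S) .id =
      rTensor H (mul' k H ∘ₗ rTensor H S)
        ∘ₗ (TensorProduct.assoc k H H H).symm.toLinearMap := by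
    ext x y z; simp
  calc _ = mul' k (H ⊗[k] H) ∘ₗ map ((TensorProduct.mk k H H).flip 1 ∘ₗ S) .id
          ∘ₗ lTensor H Δ ∘ₗ Δ := by
        rw [← LinearMap.comp_assoc _ (lTensor H Δ), LinearMap.map_comp_lTensor]; rfl
    _ = rTensor H (mul' k H ∘ₗ rTensor H S ∘ₗ Δ) ∘ₗ Δ := by
        rw [← LinearMap.comp_assoc, reassoc, LinearMap.comp_assoc, coassoc_symm]
        simp only [LinearMap.rTensor_comp, LinearMap.comp_assoc]
    _ = TensorProduct.mk k H H 1 := by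
        ext a
        simp [mul_antipode_rTensor_comul, LinearMap.rTensor_comp]

lemma map_antipode_comp_comm_comp_comul_convMul_comul :
    toConv (map S S ∘ₗ (TensorProduct.comm k H H).toLinearMap ∘ₗ Δ) * toConv Δ = 1 := by
  have reassoc : mul' k (H ⊗[k] H)
        ∘ₗ map (map S S ∘ₗ (TensorProduct.comm k H H).toLinearMap) Δ
        ∘ₗ (TensorProduct.assoc k H H H).symm.toLinearMap =
      mul' k (H ⊗[k] H) ∘ₗ map (TensorProduct.mk k H H 1 ∘ₗ S)
        (mul' k (H ⊗[k] H) ∘ₗ map ((TensorProduct.mk k H H).flip 1 ∘ₗ S) Δ) := by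
    ext x y z
    simp [← mul_assoc]
  apply WithConv.ext
  rw [LinearMap.convMul_def, LinearMap.convOne_def]
  dsimp only [ofConv_toConv]
  calc _ = (mul' k (H ⊗[k] H)
          ∘ₗ map (map S S ∘ₗ (TensorProduct.comm k H H).toLinearMap) Δ
          ∘ₗ (TensorProduct.assoc k H H H).symm.toLinearMap) ∘ₗ lTensor H Δ ∘ₗ Δ := by
        simp only [LinearMap.comp_assoc, coassoc_symm]
        rw [← LinearMap.comp_assoc _ (rTensor H Δ), LinearMap.map_comp_rTensor,
          LinearMap.comp_assoc]
    _ = TensorProduct.mk k H H 1 ∘ₗ mul' k H ∘ₗ rTensor H S ∘ₗ Δ := by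
        rw [reassoc, LinearMap.comp_assoc, ← LinearMap.comp_assoc _ (lTensor H Δ),
          LinearMap.map_comp_lTensor, LinearMap.comp_assoc,
          mul'_comp_map_antipode_tmul_one_comul_comp_comul]
        simp only [← LinearMap.comp_assoc]
        congr 1
        ext x y
        simp
    _ = _ := by
        rw [mul_antipode_rTensor_comul]
        ext
        simp [Algebra.algebraMap_eq_smul_one, Algebra.TensorProduct.one_def]

lemma comul_comp_antipode : Δ ∘ₗ S = map S S ∘ₗ (TensorProduct.comm k H H).toLinearMap ∘ₗ Δ :=
  congrArg ofConv (left_inv_eq_right_inv map_antipode_comp_comm_comp_comul_convMul_comul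
    LinearMap.comul_right_inv).symm

/-- `(1 ⊗ a₁) * Δ (S a₂) = S a ⊗ 1` in Sweedler notation. -/
lemma mul'_comp_map_one_tmul_comul_comp_antipode_comp_comul :
    mul' k (H ⊗[k] H) ∘ₗ map (TensorProduct.mk k H H 1) (Δ ∘ₗ S) ∘ₗ Δ =
      (TensorProduct.mk k H H).flip 1 ∘ₗ S := by
  have reassoc : mul' k (H ⊗[k] H)
        ∘ₗ map (TensorProduct.mk k H H 1) (map S S ∘ₗ (TensorProduct.comm k H H).toLinearMap)
        ∘ₗ (TensorProduct.assoc k H H H).toLinearMap =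
      (TensorProduct.comm k H H).toLinearMap ∘ₗ map (mul' k H ∘ₗ lTensor H S) S := by
    ext a b c; simp
  calc _ = (mul' k (H ⊗[k] H)
          ∘ₗ map (TensorProduct.mk k H H 1) (map S S ∘ₗ (TensorProduct.comm k H H).toLinearMap)
          ∘ₗ (TensorProduct.assoc k H H H).toLinearMap) ∘ₗ rTensor H Δ ∘ₗ Δ := by
        simp only [comul_comp_antipode, LinearMap.comp_assoc, coassoc]
        rw [← LinearMap.comp_assoc _ (lTensor H Δ), LinearMap.map_comp_lTensor,
          LinearMap.comp_assoc]
    _ = (TensorProduct.comm k H H).toLinearMap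
          ∘ₗ map (mul' k H ∘ₗ lTensor H S ∘ₗ Δ) S ∘ₗ Δ := by
        rw [reassoc, LinearMap.comp_assoc, ← LinearMap.comp_assoc _ (rTensor H Δ),
          LinearMap.map_comp_rTensor, LinearMap.comp_assoc]
    _ = _ := by
        rw [mul_antipode_lTensor_comul, ← LinearMap.map_comp_rTensor]
        ext a
        simp only [LinearMap.comp_apply, rTensor_counit_comul]
        simp

end HopfAlgebra

section HopfModule

variable {k H M : Type*} [CommSemiring k] [Semiring H] [HopfAlgebra k H]
  [AddCommMonoid M] [Module k M] {μ : M ⊗[k] H →ₗ[k] M} {ρ : M →ₗ[k] M ⊗[k] H}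

local notation "S" => antipode k (A := H)
local notation "Δ" => comul (R := k) (A := H)

variable (hμ_one : ∀ m : M, μ (m ⊗ₜ[k] 1) = m)
  (hμ_assoc : ∀ (m : M) (g h : H), μ (μ (m ⊗ₜ[k] g) ⊗ₜ[k] h) = μ (m ⊗ₜ[k] (g * h)))
  (hρ_counit : ∀ m : M, TensorProduct.rid k M (lTensor M counit (ρ m)) = m)
  (hρ_coassoc : ∀ m : M,
    rTensor H ρ (ρ m) = (TensorProduct.assoc k M H H).symm (lTensor M comul (ρ m)))
  (hcompat : ∀ x : M ⊗[k] H, ρ (μ x) =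
    map μ (mul' k H) (tensorTensorTensorComm k M H H H (map ρ comul x)))

variable (μ ρ) in
noncomputable def coinvariantsProj : M →ₗ[k] M := μ ∘ₗ lTensor M S ∘ₗ ρ

include hρ_coassoc hcompat in
theorem coaction_coinvariantsProj (m : M) :
    ρ (coinvariantsProj μ ρ m) = coinvariantsProj μ ρ m ⊗ₜ 1 := by
  have reassoc : map μ (mul' k H) ∘ₗ (tensorTensorTensorComm k M H H H).toLinearMap
        ∘ₗ lTensor (M ⊗[k] H) (Δ ∘ₗ S) ∘ₗ (TensorProduct.assoc k M H H).symm.toLinearMap =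
      rTensor H μ ∘ₗ (TensorProduct.assoc k M H H).symm.toLinearMap
        ∘ₗ lTensor M (mul' k (H ⊗[k] H) ∘ₗ map (TensorProduct.mk k H H 1) (Δ ∘ₗ S)) := by
    ext m a b
    simp only [AlgebraTensorModule.curry_apply, curry_apply, LinearMap.coe_restrictScalars,
      LinearMap.comp_apply, LinearEquiv.coe_coe, assoc_symm_tmul, LinearMap.lTensor_tmul,
      map_tmul, mk_apply]
    induction Δ (S b) using TensorProduct.induction_on with
    | zero => simp
    | tmul x y => simp
    | add x y hx hy => simp [tmul_add, hx, hy]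
  have tmul_one_comm : rTensor H μ ∘ₗ (TensorProduct.assoc k M H H).symm.toLinearMap
        ∘ₗ lTensor M ((TensorProduct.mk k H H).flip 1) = (TensorProduct.mk k M H).flip 1 ∘ₗ μ := by
    ext m h; simp
  -- `ρ (m₀ S(m₁)) = m₀ S(m₂)₁ ⊗ m₁ S(m₂)₂ = m₀ S(m₃) ⊗ m₁ S(m₂) = m₀ S(m₁) ⊗ 1`
  calc ρ (μ (lTensor M S (ρ m)))
      = map μ (mul' k H) (tensorTensorTensorComm k M H H H
          (lTensor (M ⊗[k] H) (Δ ∘ₗ S) (rTensor H ρ (ρ m)))) := by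
        rw [hcompat, ← LinearMap.comp_apply (map ρ Δ), LinearMap.map_comp_lTensor,
          ← LinearMap.lTensor_comp_rTensor (f := ρ), LinearMap.comp_apply]
    _ = rTensor H μ ((TensorProduct.assoc k M H H).symm
          (lTensor M (mul' k (H ⊗[k] H) ∘ₗ map (TensorProduct.mk k H H 1) (Δ ∘ₗ S))
            (lTensor M Δ (ρ m)))) := by
        rw [hρ_coassoc m]
        exact LinearMap.congr_fun reassoc _
    _ = rTensor H μ ((TensorProduct.assoc k M H H).symm
          (lTensor M ((TensorProduct.mk k H H).flip 1) (lTensor M S (ρ m)))) := by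
        rw [← LinearMap.lTensor_comp_apply, ← LinearMap.lTensor_comp_apply, LinearMap.comp_assoc,
          mul'_comp_map_one_tmul_comul_comp_antipode_comp_comul]
    _ = μ (lTensor M S (ρ m)) ⊗ₜ 1 := LinearMap.congr_fun tmul_one_comm _

include hμ_one hμ_assoc hρ_counit hρ_coassoc in
theorem action_rTensor_coinvariantsProj_coaction (m : M) :
    μ (rTensor H (coinvariantsProj μ ρ) (ρ m)) = m := by
  have reassoc : μ ∘ₗ rTensor H μ ∘ₗ rTensor H (lTensor M S)
        ∘ₗ (TensorProduct.assoc k M H H).symm.toLinearMap =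
      μ ∘ₗ lTensor M (mul' k H ∘ₗ rTensor H S) := by
    ext m a b; simp [hμ_assoc]
  have action_algebraMap :
      μ ∘ₗ lTensor M (Algebra.linearMap k H) = (TensorProduct.rid k M).toLinearMap := by
    ext m; simp [hμ_one]
  calc μ (rTensor H (coinvariantsProj μ ρ) (ρ m))
      = μ (rTensor H μ (rTensor H (lTensor M S) (rTensor H ρ (ρ m)))) := by
        simp only [coinvariantsProj, LinearMap.rTensor_comp_apply]
    _ = μ (lTensor M (mul' k H ∘ₗ rTensor H S) (lTensor M Δ (ρ m))) := by
        rw [hρ_coassoc m]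
        exact LinearMap.congr_fun reassoc _
    _ = μ (lTensor M (Algebra.linearMap k H) (lTensor M counit (ρ m))) := by
        rw [← LinearMap.lTensor_comp_apply, ← LinearMap.lTensor_comp_apply, LinearMap.comp_assoc,
          mul_antipode_rTensor_comul]
    _ = m := (LinearMap.congr_fun action_algebraMap _).trans (hρ_counit m)

include hcompat in
theorem coaction_action_of_coaction_eq {v : M} (hv : ρ v = v ⊗ₜ 1) (h : H) :
    ρ (μ (v ⊗ₜ h)) = rTensor H (μ ∘ₗ TensorProduct.mk k M H v) (Δ h) := by
  rw [hcompat]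
  simp only [map_tmul, hv]
  induction Δ h using TensorProduct.induction_on with
  | zero => simp
  | tmul x y => simp
  | add x y hx hy => simp [tmul_add, hx, hy]

include hμ_one hμ_assoc hcompat in
theorem coinvariantsProj_action_of_coaction_eq {v : M} (hv : ρ v = v ⊗ₜ 1) (g : H) :
    coinvariantsProj μ ρ (μ (v ⊗ₜ g)) = counit (R := k) g • v := by
  have reassoc (t : H ⊗[k] H) :
      μ (lTensor M S (rTensor H (μ ∘ₗ TensorProduct.mk k M H v) t)) =
        μ (v ⊗ₜ mul' k H (lTensor H S t)) := by
    induction t using TensorProduct.induction_on with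
    | zero => simp
    | tmul x y => simp [hμ_assoc]
    | add x y hx hy => simp [tmul_add, hx, hy]
  rw [coinvariantsProj, LinearMap.comp_apply, LinearMap.comp_apply,
    coaction_action_of_coaction_eq hcompat hv, reassoc, mul_antipode_lTensor_comul_apply,
    Algebra.algebraMap_eq_smul_one, tmul_smul, map_smul, hμ_one]

include hμ_one hμ_assoc hρ_counit hρ_coassoc hcompat in
theorem bijective_action_comp_rTensor_subtype {N : Submodule k M}
    (hN : ∀ v, v ∈ N ↔ ρ v = v ⊗ₜ 1) :
    Function.Bijective (μ ∘ₗ rTensor H N.subtype) := by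
  let π : M →ₗ[k] N := (coinvariantsProj μ ρ).codRestrict N fun m ↦
    (hN _).2 (coaction_coinvariantsProj hρ_coassoc hcompat m)
  have π_action (v : N) :
      π ∘ₗ μ ∘ₗ TensorProduct.mk k M H v = LinearMap.toSpanSingleton k N v ∘ₗ counit := by
    ext g
    exact coinvariantsProj_action_of_coaction_eq hμ_one hμ_assoc hcompat ((hN v).1 v.2) g
  refine Function.bijective_iff_has_inverse.2 ⟨rTensor H π ∘ₗ ρ, ?_, fun m ↦ ?_⟩
  · suffices (rTensor H π ∘ₗ ρ) ∘ₗ μ ∘ₗ rTensor H N.subtype = LinearMap.id from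
      LinearMap.congr_fun this
    refine TensorProduct.ext' fun v h ↦ ?_
    simp only [LinearMap.comp_apply, LinearMap.rTensor_tmul, Submodule.subtype_apply,
      LinearMap.id_apply]
    rw [coaction_action_of_coaction_eq hcompat ((hN v).1 v.2), ← LinearMap.rTensor_comp_apply,
      π_action, LinearMap.rTensor_comp_apply, rTensor_counit_comul]
    simp
  · simpa [← LinearMap.rTensor_comp_apply, π, LinearMap.subtype_comp_codRestrict] using
      action_rTensor_coinvariantsProj_coaction hμ_one hμ_assoc hρ_counit hρ_coassoc m

end HopfModule

section FreeHopfModule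

variable {k H M : Type*} [Field k] [Ring H] [HopfAlgebra k H]
  [AddCommGroup M] [Module k M] {μ : M ⊗[k] H →ₗ[k] M} {ρ : M →ₗ[k] M ⊗[k] H}

theorem action_comp_rTensor_subtype_comp_freeAct
    (hμ_assoc : ∀ (m : M) (g h : H), μ (μ (m ⊗ₜ[k] g) ⊗ₜ[k] h) = μ (m ⊗ₜ[k] (g * h)))
    (N : Submodule k M) :
    (μ ∘ₗ rTensor H N.subtype) ∘ₗ freeAct k H N =
      μ ∘ₗ map (μ ∘ₗ rTensor H N.subtype) LinearMap.id := by
  ext v g h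
  simp [freeAct, hμ_assoc]

theorem coaction_comp_action_comp_rTensor_subtype
    (hcompat : ∀ x : M ⊗[k] H, ρ (μ x) =
      map μ (mul' k H) (tensorTensorTensorComm k M H H H (map ρ comul x)))
    {N : Submodule k M} (hN : ∀ v ∈ N, ρ v = v ⊗ₜ 1) :
    ρ ∘ₗ μ ∘ₗ rTensor H N.subtype =
      map (μ ∘ₗ rTensor H N.subtype) LinearMap.id ∘ₗ freeCoact k H N := by
  refine TensorProduct.ext' fun v h ↦ ?_
  simp only [freeCoact, LinearMap.comp_apply, LinearMap.rTensor_tmul, Submodule.subtype_apply,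
    coaction_action_of_coaction_eq hcompat (hN v v.2), LinearEquiv.coe_coe, map_tmul,
    LinearMap.id_apply]
  induction comul (R := k) h using TensorProduct.induction_on with
  | zero => simp
  | tmul x y => simp
  | add x y hx hy => simp [tmul_add, hx, hy]

end FreeHopfModule

variable (k H M : Type*)

section HopfModule

variable [Field k] [Ring H] [HopfAlgebra k H] [AddCommGroup M] [Module k M]

/-- Fundamental theorem of Hopf modules: let `H` be a Hopf algebra over a field `k` and let
`M` be a (right,right) Hopf module over `H`, i.e. a right `H`-module (action `μ`), a right
`H`-comodule (coaction `ρ`), satisfying the Hopf module compatibility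
`ρ(m·h) = Σ m₀·h₁ ⊗ m₁h₂`.  Then `M` is isomorphic, as a Hopf module, to
`M^{coH} ⊗ H` where `M^{coH} = {m : ρ(m) = m ⊗ 1}` is the space of coinvariants: there is
a `k`-linear equivalence `M^{coH} ⊗ H ≃ M` commuting with the `H`-actions and
`H`-coactions (where `M^{coH} ⊗ H` carries the action `(v ⊗ g)·h = v ⊗ gh` and the
coaction `id ⊗ Δ`).  Since `M` ranges over all Hopf modules, the functor
`V ↦ V ⊗ H` is an equivalence onto the category of Hopf modules, with quasi-inverse the
coinvariants functor. -/
theorem fundamental_theorem_of_hopf_modules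
    (μ : M ⊗[k] H →ₗ[k] M) (ρ : M →ₗ[k] M ⊗[k] H)
    -- `μ` is a unital associative right action:
    (hμ_one : ∀ m : M, μ (m ⊗ₜ[k] 1) = m)
    (hμ_assoc : ∀ (m : M) (g h : H), μ (μ (m ⊗ₜ[k] g) ⊗ₜ[k] h) = μ (m ⊗ₜ[k] (g * h)))
    -- `ρ` is a counital coassociative coaction:
    (hρ_counit : (TensorProduct.rid k M).toLinearMap
        ∘ₗ TensorProduct.map LinearMap.id Coalgebra.counit ∘ₗ ρ = LinearMap.id)
    (hρ_coassoc : TensorProduct.map ρ LinearMap.id ∘ₗ ρ =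
      (TensorProduct.assoc k M H H).symm.toLinearMap
        ∘ₗ TensorProduct.map LinearMap.id Coalgebra.comul ∘ₗ ρ)
    -- Hopf module compatibility `ρ ∘ μ = (μ ⊗ m) ∘ (23-swap) ∘ (ρ ⊗ Δ)`:
    (hcompat : ρ ∘ₗ μ =
      TensorProduct.map μ (LinearMap.mul' k H)
        ∘ₗ (TensorProduct.tensorTensorTensorComm k M H H H).toLinearMap
        ∘ₗ TensorProduct.map ρ Coalgebra.comul) :
    ∀ coinv : Submodule k M,
      coinv = LinearMap.ker (ρ - (TensorProduct.mk k M H).flip 1) →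
      ∃ e : (↥coinv ⊗[k] H) ≃ₗ[k] M,
        -- `e` is a morphism of right `H`-modules:
        (e.toLinearMap ∘ₗ freeAct k H (↥coinv) =
          μ ∘ₗ TensorProduct.map e.toLinearMap LinearMap.id) ∧
        -- `e` is a morphism of right `H`-comodules:
        (ρ ∘ₗ e.toLinearMap =
          TensorProduct.map e.toLinearMap LinearMap.id ∘ₗ freeCoact k H (↥coinv)) := by
  rintro coinv rfl
  have mem_coinv (v : M) :
      v ∈ LinearMap.ker (ρ - (TensorProduct.mk k M H).flip 1) ↔ ρ v = v ⊗ₜ 1 := by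
    simp [sub_eq_zero]
  refine ⟨LinearEquiv.ofBijective _ (bijective_action_comp_rTensor_subtype hμ_one hμ_assoc
    (LinearMap.congr_fun hρ_counit) (LinearMap.congr_fun hρ_coassoc) (LinearMap.congr_fun hcompat)
    mem_coinv), ?_, ?_⟩
  · exact action_comp_rTensor_subtype_comp_freeAct hμ_assoc _
  · exact coaction_comp_action_comp_rTensor_subtype (LinearMap.congr_fun hcompat)
      fun v hv ↦ (mem_coinv v).1 hv

end HopfModule
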